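/- arXiv:1703.09089 — 2 statements merged into one kernel-verified Lean document; each statement's English description precedes it below -/
import Mathlib

section
/- Let n ≥ 1, let x be a partition of [0,1] of size n, let f : [0,1] → [0,1] be a continuous map which is Markov for x, and suppose the incidence matrix C of f with respect to x is aperiodic (primitive), i.e. there exists p ≥ 1 with every entry of C^p positive. Then for every subset J of [0,1] that contains some partition interval [x(k−1), x(k)], there exists p ≥ 1 with f^p(J) = [0,1]. -/
open Set Matrix

/-- A partition of `[0,1]` of size `m`: a strictly increasing map
`{0,1,…,m} → ℝ` with first value `0` and last value `1`. -/
structure UnitPartition (m : ℕ) where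
  pts : Fin (m + 1) → ℝ
  strictMono : StrictMono pts
  zero : pts 0 = 0
  one : pts (Fin.last m) = 1

/-- The `j`-th interval `I_j = [y(j-1), y(j)]` of a partition, for `j = 1, …, m`. -/
def UnitPartition.interval {m : ℕ} (y : UnitPartition m) (j : Fin m) : Set ℝ :=
  Set.Icc (y.pts j.castSucc) (y.pts j.succ)

/-- `f` is Markov for the partition `y`. -/
def IsMarkov {m : ℕ} (y : UnitPartition m) (f : ℝ → ℝ) : Prop :=
  ∀ j : Fin m, ∃ a b : Fin (m + 1), a ≤ b ∧
    f '' y.interval j = Set.Icc (y.pts a) (y.pts b)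

open Classical in
/-- The incidence matrix of `f` with respect to `y`, with natural-number entries:
`N i j = 1` if `I_i ⊆ f(I_j)` and `0` otherwise. -/
noncomputable def incidence {m : ℕ} (y : UnitPartition m) (f : ℝ → ℝ) :
    Matrix (Fin m) (Fin m) ℕ :=
  Matrix.of fun i j => if y.interval i ⊆ f '' y.interval j then 1 else 0

open Classical in
/-- The incidence matrix of `f` with respect to `y`, regarded as a real matrix. -/
noncomputable def incidenceR {m : ℕ} (y : UnitPartition m) (f : ℝ → ℝ) :
    Matrix (Fin m) (Fin m) ℝ :=
  Matrix.of fun i j => if y.interval i ⊆ f '' y.interval j then 1 else 0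

/-!
A positive entry `(C ^ p) l k` is a chain of intervals `I_l ⊆ f(I_{j₁})`, `I_{j₁} ⊆ f(I_{j₂})`,
…, `I_{j_{p-1}} ⊆ f(I_k)`; composing the inclusions gives `I_l ⊆ f^p(I_k)`. If every entry of
`C ^ p` is positive, `f^p(I_k)` therefore contains every partition interval, hence all of `[0,1]`,
while `f^p` maps `[0,1]` into itself.
-/

theorem Monotone.iUnion_Icc_castSucc_succ {α : Type*} [LinearOrder α] {m : ℕ}
    {a : Fin (m + 2) → α} (ha : Monotone a) :
    ⋃ j : Fin (m + 1), Icc (a j.castSucc) (a j.succ) = Icc (a 0) (a (Fin.last (m + 1))) := by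
  induction m with
  | zero => exact iSup_unique (ι := Fin 1) _
  | succ m ih =>
    have hinit := ih (a := a ∘ Fin.castSucc) (ha.comp Fin.strictMono_castSucc.monotone)
    rw [Set.iUnion_fin_add_one_eq_iUnion_castSucc]
    simp only [Function.comp_def, Fin.succ_castSucc] at hinit ⊢
    rw [hinit, Fin.succ_last]
    exact Icc_union_Icc_eq_Icc (ha (Fin.zero_le _)) (ha (Fin.castSucc_le_succ _))

theorem UnitPartition.iUnion_interval {m : ℕ} (y : UnitPartition m) :
    ⋃ j, y.interval j = Icc 0 1 := by
  obtain _ | m := m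
  · exact absurd (y.zero.symm.trans y.one) zero_ne_one
  · rw [← y.zero, ← y.one]
    exact y.strictMono.monotone.iUnion_Icc_castSucc_succ

theorem Matrix.exists_pos_of_pow_succ_pos {ι R : Type*} [Fintype ι] [DecidableEq ι]
    [CommSemiring R] [PartialOrder R] [CanonicallyOrderedAdd R] [NoZeroDivisors R]
    {A : Matrix ι ι R} {p : ℕ} {l k : ι} (h : 0 < (A ^ (p + 1)) l k) :
    ∃ j, 0 < (A ^ p) l j ∧ 0 < A j k := by
  rw [pow_succ, Matrix.mul_apply, Finset.sum_pos_iff] at h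
  obtain ⟨j, -, hj⟩ := h
  exact ⟨j, CanonicallyOrderedAdd.mul_pos.1 hj⟩

theorem subset_iterate_image_of_pow_pos {ι R α : Type*} [Fintype ι] [DecidableEq ι]
    [CommSemiring R] [PartialOrder R] [CanonicallyOrderedAdd R] [NoZeroDivisors R]
    {A : Matrix ι ι R} {S : ι → Set α} {f : α → α} (hA : ∀ j k, 0 < A j k → S j ⊆ f '' S k) :
    ∀ {p : ℕ} {l k : ι}, 0 < (A ^ p) l k → S l ⊆ f^[p] '' S k
  | 0, l, k, h => by
    obtain rfl | hlk := eq_or_ne l k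
    · simp
    · simp [Matrix.one_apply_ne hlk] at h
  | p + 1, l, k, h => by
    obtain ⟨j, hlj, hjk⟩ := Matrix.exists_pos_of_pow_succ_pos h
    calc S l ⊆ f^[p] '' S j := subset_iterate_image_of_pow_pos hA hlj
      _ ⊆ f^[p] '' (f '' S k) := image_mono (hA j k hjk)
      _ = f^[p + 1] '' S k := by rw [Function.iterate_succ, image_comp]

theorem incidence_pos_iff {m : ℕ} (y : UnitPartition m) (f : ℝ → ℝ) (i j : Fin m) :
    0 < incidence y f i j ↔ y.interval i ⊆ f '' y.interval j := by
  simp [incidence, pos_iff_ne_zero]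

theorem eventually_onto_of_aperiodic_general
    (n : ℕ) (x : UnitPartition n) (f : ℝ → ℝ)
    (hmaps : Set.MapsTo f (Set.Icc 0 1) (Set.Icc 0 1))
    (haper : ∃ p : ℕ, 1 ≤ p ∧ ∀ l k : Fin n, 0 < (incidence x f ^ p) l k) :
    ∀ J : Set ℝ, J ⊆ Set.Icc 0 1 → (∃ k : Fin n, x.interval k ⊆ J) →
      ∃ p : ℕ, 1 ≤ p ∧ f^[p] '' J = Set.Icc (0 : ℝ) 1 := by
  obtain ⟨p, hp, hpos⟩ := haper
  rintro J hJ ⟨k, hk⟩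
  refine ⟨p, hp, ((image_mono hJ).trans (hmaps.iterate p).image_subset).antisymm ?_⟩
  rw [← x.iUnion_interval]
  refine iUnion_subset fun l => ?_
  calc x.interval l ⊆ f^[p] '' x.interval k :=
        subset_iterate_image_of_pow_pos (fun i j => (incidence_pos_iff x f i j).1) (hpos l k)
    _ ⊆ f^[p] '' J := image_mono hk

theorem eventually_onto_of_aperiodic
    (n : ℕ) (hn : 1 ≤ n) (x : UnitPartition n) (f : ℝ → ℝ)
    (hmaps : Set.MapsTo f (Set.Icc 0 1) (Set.Icc 0 1))
    (hcont : ContinuousOn f (Set.Icc 0 1))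
    (hMarkov : IsMarkov x f)
    (haper : ∃ p : ℕ, 1 ≤ p ∧ ∀ l k : Fin n, 0 < (incidence x f ^ p) l k) :
    ∀ J : Set ℝ, J ⊆ Set.Icc 0 1 → (∃ k : Fin n, x.interval k ⊆ J) →
      ∃ p : ℕ, 1 ≤ p ∧ f^[p] '' J = Set.Icc (0 : ℝ) 1 :=
  eventually_onto_of_aperiodic_general n x f hmaps haper
end

section
/- Let m ≥ 1, let y be a partition of [0,1] of size m, let λ > 1, and let f : [0,1] → [0,1] be continuous, strictly monotone on each interval I_j = [y(j−1), y(j)], mapping every partition point y(j) to a partition point, and satisfying |f(s) − f(t)| = λ·|s − t| for all s, t in the same interval I_j. Suppose moreover that for every j = 1,…,m there exists p ≥ 1 with f^p(I_j) = [0,1]. Let N be the incidence matrix of f with respect to y. Then: (1) N is an aperiodic (primitive) odd-block matrix with only entries 0 and 1; (2) the vector w of interval lengths, w_j = y(j) − y(j−1), is a positive eigenvector of Nᵀ with eigenvalue λ, so λ is an eigenvalue of N; and (3) λ is the leading eigenvalue of N: every complex eigenvalue μ of N satisfies |μ| ≤ λ. -/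
/-!
On each `I j` the map `f` is continuous and strictly monotone, so `f (I j)` is the interval
between the partition points `y (φ (j-1))` and `y (φ j)` onto which `f` sends the endpoints;
column `j` of `N` is therefore the indicator of a run of consecutive intervals, which is the
odd-block structure with `φ` itself as witness. Summing the lengths over that run telescopes to
`|f (I j)| = λ |I j|`, i.e. `Nᵀ w = λ w`, and a positive left eigenvector of a nonnegative matrix
bounds every eigenvalue: pairing `|N v| ≤ N |v|` with `w` gives `|μ| ⟨w, |v|⟩ ≤ λ ⟨w, |v|⟩`.
For primitivity, the Markov property propagates along iterates: `f^[p] (I j)` is covered by the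
intervals `I i` with `(N ^ p) i j ≠ 0`, and once `f^[p] (I j) = [0, 1]` it meets the interior of
every `I i`, which lies in no other interval.
-/

open Set Matrix

/-- An `m × m` nonnegative integer matrix is odd-block. -/
def IsOddBlock {m : ℕ} (A : Matrix (Fin m) (Fin m) ℕ) : Prop :=
  (∀ (j i₁ i₂ i₃ : Fin m), i₁ ≤ i₂ → i₂ ≤ i₃ → A i₁ j ≠ 0 → A i₃ j ≠ 0 → A i₂ j ≠ 0) ∧
  ∃ φ : Fin (m + 1) → Fin (m + 1), ∀ (i j : Fin m),
    Odd (A i j) ↔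
      (min (φ j.castSucc) (φ j.succ) < i.succ ∧ i.succ ≤ max (φ j.castSucc) (φ j.succ))

theorem Fin.sum_filter_sub_of_lt {G : Type*} [AddCommGroup G] {m : ℕ} (g : Fin (m + 1) → G)
    {a b : Fin (m + 1)} (hab : a < b) :
    ∑ i : Fin m with a ≤ i.castSucc ∧ i.succ ≤ b, (g i.succ - g i.castSucc) = g b - g a := by
  set c := a.castPred (Fin.ne_last_of_lt hab)
  set d := b.pred (Fin.ne_zero_of_lt hab)
  have hfilter : ({i | a ≤ i.castSucc ∧ i.succ ≤ b} : Finset (Fin m)) = Finset.Icc c d := by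
    ext i
    simp only [Finset.mem_filter, Finset.mem_univ, true_and, Finset.mem_Icc, Fin.le_def,
      Fin.val_castSucc, Fin.val_succ, c, d, Fin.coe_castPred, Fin.val_pred]
    omega
  have hcd : c ≤ d := by
    have := Fin.lt_def.1 hab
    simp only [Fin.le_def, c, d, Fin.coe_castPred, Fin.val_pred]
    omega
  rw [hfilter, Fin.sum_Icc_sub hcd, Fin.succ_pred, Fin.castSucc_castPred]

theorem Set.iterate_image_eq_of_le {α : Type*} {f : α → α} {s t : Set α} (hs : f '' s = s)
    {p q : ℕ} (hpq : p ≤ q) (ht : f^[p] '' t = s) : f^[q] '' t = s := by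
  obtain ⟨d, rfl⟩ := Nat.exists_eq_add_of_le' hpq
  rw [Function.iterate_add, Set.image_comp, ht, Set.image_iterate_eq]
  exact Function.iterate_fixed hs d

theorem Set.image_eq_of_mapsTo_of_iterate_image_eq {α : Type*} {f : α → α} {s t : Set α}
    (hf : MapsTo f s s) (hts : t ⊆ s) {p : ℕ} (hp : 1 ≤ p) (ht : f^[p] '' t = s) :
    f '' s = s := by
  refine hf.image_subset.antisymm ?_
  obtain ⟨q, rfl⟩ := Nat.exists_eq_add_of_le' hp
  calc s = f '' (f^[q] '' t) := by rw [← ht, Function.iterate_succ', Set.image_comp]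
    _ ⊆ f '' s := Set.image_mono ((Set.image_mono hts).trans (hf.iterate q).image_subset)

namespace Matrix

variable {n : Type*} [Fintype n] [DecidableEq n]

theorem exists_pow_apply_ne_zero_of_mem_iterate_image {α : Type*} (N : Matrix n n ℕ)
    (S : n → Set α) (g : α → α) (hN : ∀ k, ∀ x ∈ g '' S k, ∃ i, N i k ≠ 0 ∧ x ∈ S i)
    (p : ℕ) (j : n) : ∀ x ∈ g^[p] '' S j, ∃ i, (N ^ p) i j ≠ 0 ∧ x ∈ S i := by
  induction p with
  | zero => exact fun x hx => ⟨j, by simp, by simpa using hx⟩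
  | succ p ih =>
    rintro _ ⟨z, hz, rfl⟩
    rw [Function.iterate_succ_apply']
    obtain ⟨k, hkj, hzk⟩ := ih _ ⟨z, hz, rfl⟩
    obtain ⟨i, hik, hi⟩ := hN k _ ⟨_, hzk, rfl⟩
    refine ⟨i, fun h => mul_ne_zero hik hkj ?_, hi⟩
    rw [pow_succ', mul_apply, Finset.sum_eq_zero_iff] at h
    exact h k (Finset.mem_univ k)

theorem hasEigenvalue_toLin'_of_vecMul_eq {K : Type*} [Field K] {A : Matrix n n K} {w : n → K}
    (hw : w ≠ 0) {r : K} (hwA : w ᵥ* A = r • w) : Module.End.HasEigenvalue (toLin' A) r := by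
  have hT : Module.End.HasEigenvalue (toLin' Aᵀ) r :=
    Module.End.hasEigenvalue_of_hasEigenvector
      ⟨Module.End.mem_eigenspace_iff.2 (by rw [toLin'_apply, mulVec_transpose, hwA]), hw⟩
  rwa [Module.End.hasEigenvalue_iff_mem_spectrum, spectrum_toLin',
    mem_spectrum_iff_isRoot_charpoly, charpoly_transpose, ← mem_spectrum_iff_isRoot_charpoly,
    ← spectrum_toLin', ← Module.End.hasEigenvalue_iff_mem_spectrum] at hT

theorem norm_le_of_mem_spectrum_of_vecMul_eq {A : Matrix n n ℝ} (hA : ∀ i j, 0 ≤ A i j)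
    {w : n → ℝ} (hw : ∀ i, 0 < w i) {r : ℝ} (hwA : w ᵥ* A = r • w) {μ : ℂ}
    (hμ : μ ∈ spectrum ℂ (A.map Complex.ofReal)) : ‖μ‖ ≤ r := by
  rw [← spectrum_toLin', ← Module.End.hasEigenvalue_iff_mem_spectrum] at hμ
  obtain ⟨v, hv, hv0⟩ := hμ.exists_hasEigenvector
  rw [Module.End.mem_eigenspace_iff, toLin'_apply] at hv
  set S := ∑ k, w k * ‖v k‖
  have hS : 0 < S := by
    obtain ⟨k, hk⟩ := Function.ne_iff.1 hv0
    exact Finset.sum_pos' (fun k _ => mul_nonneg (hw k).le (norm_nonneg _))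
      ⟨k, Finset.mem_univ k, mul_pos (hw k) (norm_pos_iff.2 hk)⟩
  have hrow : ∀ j, ‖(A.map Complex.ofReal *ᵥ v) j‖ ≤ ∑ k, A j k * ‖v k‖ := fun j =>
    calc ‖∑ k, (A j k : ℂ) * v k‖ ≤ ∑ k, ‖(A j k : ℂ) * v k‖ := norm_sum_le _ _
      _ = ∑ k, A j k * ‖v k‖ := by
        simp only [norm_mul, Complex.norm_real, Real.norm_of_nonneg (hA _ _)]
  refine le_of_mul_le_mul_right ?_ hS
  calc ‖μ‖ * S = ∑ j, w j * ‖(A.map Complex.ofReal *ᵥ v) j‖ := by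
        simp only [S, hv, Pi.smul_apply, smul_eq_mul, norm_mul, Finset.mul_sum]
        ring_nf
    _ ≤ ∑ j, w j * ∑ k, A j k * ‖v k‖ := by
        gcongr with j
        exacts [(hw j).le, hrow j]
    _ = ∑ k, (w ᵥ* A) k * ‖v k‖ := by
        simp only [vecMul, dotProduct, Finset.mul_sum, Finset.sum_mul, mul_assoc]
        exact Finset.sum_comm
    _ = r * S := by
        simp only [S, hwA, Pi.smul_apply, smul_eq_mul, Finset.mul_sum, mul_assoc]

end Matrix

namespace UnitPartition

variable {m : ℕ} (y : UnitPartition m)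

def length (i : Fin m) : ℝ := y.pts i.succ - y.pts i.castSucc

theorem pts_castSucc_lt_succ (i : Fin m) : y.pts i.castSucc < y.pts i.succ :=
  y.strictMono i.castSucc_lt_succ

theorem length_pos (i : Fin m) : 0 < y.length i :=
  sub_pos.2 (y.pts_castSucc_lt_succ i)

theorem pts_mem_Icc (k : Fin (m + 1)) : y.pts k ∈ Icc (0 : ℝ) 1 :=
  ⟨y.zero ▸ y.strictMono.monotone (Fin.zero_le k), y.one ▸ y.strictMono.monotone (Fin.le_last k)⟩

theorem interval_subset_Icc (i : Fin m) : y.interval i ⊆ Icc (0 : ℝ) 1 :=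
  Icc_subset_Icc (y.pts_mem_Icc _).1 (y.pts_mem_Icc _).2

theorem interval_subset_Icc_iff {i : Fin m} {a b : Fin (m + 1)} :
    y.interval i ⊆ Icc (y.pts a) (y.pts b) ↔ a ≤ i.castSucc ∧ i.succ ≤ b := by
  rw [interval, Icc_subset_Icc_iff (y.pts_castSucc_lt_succ i).le, y.strictMono.le_iff_le,
    y.strictMono.le_iff_le]

theorem exists_mem_interval {a b : Fin (m + 1)} (hab : a < b) {x : ℝ}
    (hx : x ∈ Icc (y.pts a) (y.pts b)) :
    ∃ i : Fin m, a ≤ i.castSucc ∧ i.succ ≤ b ∧ x ∈ y.interval i := by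
  set L : Finset (Fin (m + 1)) := {k | k < b ∧ y.pts k ≤ x}
  have haL : a ∈ L := by simp [L, hab, hx.1]
  set k := L.max' ⟨a, haL⟩
  have hkL : k < b ∧ y.pts k ≤ x := by simpa [L] using L.max'_mem ⟨a, haL⟩
  set i := k.castPred (Fin.ne_last_of_lt hkL.1)
  have hik : i.castSucc = k := Fin.castSucc_castPred _ _
  have hib : i.succ ≤ b := by rw [← Fin.castSucc_lt_iff_succ_le, hik]; exact hkL.1
  refine ⟨i, hik ▸ L.le_max' a haL, hib, hik ▸ hkL.2, ?_⟩
  rcases hib.eq_or_lt with hb | hb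
  · exact hb ▸ hx.2
  · by_contra! hlt
    have : i.succ ≤ k := L.le_max' _ (by simp [L, hb, hlt.le])
    exact absurd (hik ▸ i.castSucc_lt_succ) this.not_gt

theorem eq_of_mem_Ioo_of_mem_interval {i k : Fin m} {x : ℝ}
    (hx : x ∈ Ioo (y.pts i.castSucc) (y.pts i.succ)) (hk : x ∈ y.interval k) : k = i := by
  refine le_antisymm (not_lt.1 fun hik => ?_) (not_lt.1 fun hki => ?_)
  · have := y.strictMono.monotone (Fin.succ_le_castSucc_iff.2 hik)
    linarith [hx.2, hk.1]
  · have := y.strictMono.monotone (Fin.succ_le_castSucc_iff.2 hki)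
    linarith [hx.1, hk.2]

end UnitPartition

theorem incidence_ne_zero_iff {m : ℕ} (y : UnitPartition m) (f : ℝ → ℝ) (i j : Fin m) :
    incidence y f i j ≠ 0 ↔ y.interval i ⊆ f '' y.interval j := by
  simp [incidence]

theorem incidence_eq_zero_or_eq_one {m : ℕ} (y : UnitPartition m) (f : ℝ → ℝ) (i j : Fin m) :
    incidence y f i j = 0 ∨ incidence y f i j = 1 := by
  simp only [incidence, of_apply]
  split_ifs <;> simp

theorem incidenceR_eq_map {m : ℕ} (y : UnitPartition m) (f : ℝ → ℝ) :
    incidenceR y f = (incidence y f).map (↑) := by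
  ext i j
  simp only [incidenceR, incidence, of_apply, map_apply]
  split_ifs <;> simp

section Markov

variable {m : ℕ} {y : UnitPartition m} {f : ℝ → ℝ} {φ : Fin (m + 1) → Fin (m + 1)}

theorem image_interval_eq (hcont : ContinuousOn f (Icc 0 1))
    (hmono : ∀ j : Fin m, StrictMonoOn f (y.interval j) ∨ StrictAntiOn f (y.interval j))
    (hφ : ∀ k, f (y.pts k) = y.pts (φ k)) (j : Fin m) :
    f '' y.interval j =
      Icc (y.pts (min (φ j.castSucc) (φ j.succ))) (y.pts (max (φ j.castSucc) (φ j.succ))) := by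
  have hcont_j := hcont.mono (y.interval_subset_Icc j)
  have hmono_j := hmono j
  rw [UnitPartition.interval, ← uIcc_of_le (y.pts_castSucc_lt_succ j).le] at hcont_j hmono_j ⊢
  rw [y.strictMono.monotone.map_min, y.strictMono.monotone.map_max, ← hφ, ← hφ]
  rcases hmono_j with h | h
  exacts [hcont_j.image_uIcc_of_monotoneOn h.monotoneOn,
    hcont_j.image_uIcc_of_antitoneOn h.antitoneOn]

theorem min_phi_lt_max_phi
    (hmono : ∀ j : Fin m, StrictMonoOn f (y.interval j) ∨ StrictAntiOn f (y.interval j))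
    (hφ : ∀ k, f (y.pts k) = y.pts (φ k)) (j : Fin m) :
    min (φ j.castSucc) (φ j.succ) < max (φ j.castSucc) (φ j.succ) := by
  have hinj : Set.InjOn f (y.interval j) := (hmono j).elim StrictMonoOn.injOn StrictAntiOn.injOn
  refine min_lt_max.2 fun h => (y.pts_castSucc_lt_succ j).ne (hinj ?_ ?_ ?_)
  · exact left_mem_Icc.2 (y.pts_castSucc_lt_succ j).le
  · exact right_mem_Icc.2 (y.pts_castSucc_lt_succ j).le
  · rw [hφ, hφ, h]

theorem interval_subset_image_iff (hcont : ContinuousOn f (Icc 0 1))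
    (hmono : ∀ j : Fin m, StrictMonoOn f (y.interval j) ∨ StrictAntiOn f (y.interval j))
    (hφ : ∀ k, f (y.pts k) = y.pts (φ k)) (i j : Fin m) :
    y.interval i ⊆ f '' y.interval j ↔
      min (φ j.castSucc) (φ j.succ) ≤ i.castSucc ∧ i.succ ≤ max (φ j.castSucc) (φ j.succ) := by
  rw [image_interval_eq hcont hmono hφ, y.interval_subset_Icc_iff]

theorem exists_interval_subset_image (hcont : ContinuousOn f (Icc 0 1))
    (hmono : ∀ j : Fin m, StrictMonoOn f (y.interval j) ∨ StrictAntiOn f (y.interval j))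
    (hφ : ∀ k, f (y.pts k) = y.pts (φ k)) (j : Fin m) {x : ℝ} (hx : x ∈ f '' y.interval j) :
    ∃ i, y.interval i ⊆ f '' y.interval j ∧ x ∈ y.interval i := by
  rw [image_interval_eq hcont hmono hφ] at hx
  obtain ⟨i, hlo, hhi, hx⟩ := y.exists_mem_interval (min_phi_lt_max_phi hmono hφ j) hx
  exact ⟨i, (interval_subset_image_iff hcont hmono hφ i j).2 ⟨hlo, hhi⟩, hx⟩

theorem isOddBlock_incidence (hcont : ContinuousOn f (Icc 0 1))
    (hmono : ∀ j : Fin m, StrictMonoOn f (y.interval j) ∨ StrictAntiOn f (y.interval j))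
    (hφ : ∀ k, f (y.pts k) = y.pts (φ k)) : IsOddBlock (incidence y f) := by
  have hne : ∀ i j, incidence y f i j ≠ 0 ↔
      min (φ j.castSucc) (φ j.succ) < i.succ ∧ i.succ ≤ max (φ j.castSucc) (φ j.succ) := by
    intro i j
    rw [incidence_ne_zero_iff, interval_subset_image_iff hcont hmono hφ, Fin.le_castSucc_iff]
  refine ⟨fun j i₁ i₂ i₃ h₁₂ h₂₃ h₁ h₃ => ?_, φ, fun i j => ?_⟩
  · rw [hne] at h₁ h₃ ⊢
    exact ⟨h₁.1.trans_le (Fin.succ_le_succ_iff.2 h₁₂), (Fin.succ_le_succ_iff.2 h₂₃).trans h₃.2⟩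
  · rw [← hne]
    rcases incidence_eq_zero_or_eq_one y f i j with h | h <;> simp [h]

theorem length_vecMul_incidenceR (hcont : ContinuousOn f (Icc 0 1))
    (hmono : ∀ j : Fin m, StrictMonoOn f (y.interval j) ∨ StrictAntiOn f (y.interval j))
    (hφ : ∀ k, f (y.pts k) = y.pts (φ k)) (j : Fin m) :
    (y.length ᵥ* incidenceR y f) j = |f (y.pts j.succ) - f (y.pts j.castSucc)| := by
  have hterm : ∀ i, y.length i * incidenceR y f i j =
      if min (φ j.castSucc) (φ j.succ) ≤ i.castSucc ∧ i.succ ≤ max (φ j.castSucc) (φ j.succ)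
      then y.pts i.succ - y.pts i.castSucc else 0 := by
    intro i
    simp only [incidenceR, of_apply, interval_subset_image_iff hcont hmono hφ]
    split_ifs <;> simp [UnitPartition.length]
  simp only [vecMul, dotProduct, hterm]
  rw [← Finset.sum_filter, Fin.sum_filter_sub_of_lt y.pts (min_phi_lt_max_phi hmono hφ j),
    y.strictMono.monotone.map_max, y.strictMono.monotone.map_min, max_sub_min_eq_abs, hφ, hφ]

theorem exists_pow_incidence_pos (hm : 1 ≤ m) (hmaps : MapsTo f (Icc 0 1) (Icc 0 1))
    (hcont : ContinuousOn f (Icc 0 1))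
    (hmono : ∀ j : Fin m, StrictMonoOn f (y.interval j) ∨ StrictAntiOn f (y.interval j))
    (hφ : ∀ k, f (y.pts k) = y.pts (φ k))
    (honto : ∀ j : Fin m, ∃ p : ℕ, 1 ≤ p ∧ f^[p] '' y.interval j = Icc (0 : ℝ) 1) :
    ∃ p : ℕ, 1 ≤ p ∧ ∀ i j : Fin m, 0 < (incidence y f ^ p) i j := by
  choose P hP₁ hP using honto
  have hle : ∀ j, P j ≤ ∑ k, P k := fun j =>
    Finset.single_le_sum (fun _ _ => Nat.zero_le _) (Finset.mem_univ j)
  have j₀ : Fin m := ⟨0, hm⟩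
  have hJ : f '' Icc 0 1 = Icc 0 1 :=
    image_eq_of_mapsTo_of_iterate_image_eq hmaps (y.interval_subset_Icc j₀) (hP₁ j₀) (hP j₀)
  refine ⟨∑ k, P k, (hP₁ j₀).trans (hle j₀), fun i j => Nat.pos_of_ne_zero ?_⟩
  obtain ⟨x, hx⟩ := nonempty_Ioo.2 (y.pts_castSucc_lt_succ i)
  have hxj : x ∈ f^[∑ k, P k] '' y.interval j := by
    rw [iterate_image_eq_of_le hJ (hle j) (hP j)]
    exact y.interval_subset_Icc i (Ioo_subset_Icc_self hx)
  obtain ⟨k, hk, hxk⟩ := (incidence y f).exists_pow_apply_ne_zero_of_mem_iterate_image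
    y.interval f (fun k x hx => by
      simpa only [incidence_ne_zero_iff] using exists_interval_subset_image hcont hmono hφ k hx)
    _ j x hxj
  rwa [y.eq_of_mem_Ioo_of_mem_interval hx hxk] at hk

end Markov

theorem incidence_aperiodic_oddblock_leading_eigenvalue_general
    (m : ℕ) (hm : 1 ≤ m) (y : UnitPartition m) (lam : ℝ)
    (f : ℝ → ℝ)
    (hmaps : Set.MapsTo f (Set.Icc 0 1) (Set.Icc 0 1))
    (hcont : ContinuousOn f (Set.Icc 0 1))
    (hmono : ∀ j : Fin m, StrictMonoOn f (y.interval j) ∨ StrictAntiOn f (y.interval j))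
    (hpts : ∀ j : Fin (m + 1), ∃ k : Fin (m + 1), f (y.pts j) = y.pts k)
    (hlen : ∀ j : Fin m, ∀ s ∈ y.interval j, ∀ t ∈ y.interval j,
      |f s - f t| = lam * |s - t|)
    (honto : ∀ j : Fin m, ∃ p : ℕ, 1 ≤ p ∧ f^[p] '' y.interval j = Set.Icc (0 : ℝ) 1) :
    -- (1) `N` is an aperiodic odd-block matrix with only entries 0 and 1
    (IsOddBlock (incidence y f) ∧
      (∃ p : ℕ, 1 ≤ p ∧ ∀ i j : Fin m, 0 < (incidence y f ^ p) i j) ∧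
      (∀ i j : Fin m, incidence y f i j = 0 ∨ incidence y f i j = 1)) ∧
    -- (2) the vector of interval lengths is a positive eigenvector of `Nᵀ` with
    -- eigenvalue `λ`, so `λ` is an eigenvalue of `N`
    ((incidenceR y f)ᵀ.mulVec (fun i => y.pts i.succ - y.pts i.castSucc)
        = lam • (fun j : Fin m => y.pts j.succ - y.pts j.castSucc) ∧
      (∀ i : Fin m, 0 < y.pts i.succ - y.pts i.castSucc) ∧
      Module.End.HasEigenvalue (Matrix.toLin' (incidenceR y f)) lam) ∧
    -- (3) `λ` is the leading eigenvalue of `N`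
    (∀ μ : ℂ, μ ∈ spectrum ℂ ((incidenceR y f).map (Complex.ofReal)) →
      ‖μ‖ ≤ lam) := by
  choose φ hφ using hpts
  have heigen : y.length ᵥ* incidenceR y f = lam • y.length := by
    ext j
    have hleft := left_mem_Icc.2 (y.pts_castSucc_lt_succ j).le
    have hright := right_mem_Icc.2 (y.pts_castSucc_lt_succ j).le
    rw [length_vecMul_incidenceR hcont hmono hφ, hlen j _ hright _ hleft,
      abs_of_pos (sub_pos.2 (y.pts_castSucc_lt_succ j))]
    rfl
  have hnonneg : ∀ i j, 0 ≤ incidenceR y f i j := fun i j => by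
    rw [incidenceR_eq_map]; exact Nat.cast_nonneg _
  have hlength_ne : y.length ≠ 0 := fun h => (y.length_pos ⟨0, hm⟩).ne' (congrFun h _)
  refine ⟨⟨isOddBlock_incidence hcont hmono hφ,
      exists_pow_incidence_pos hm hmaps hcont hmono hφ honto, incidence_eq_zero_or_eq_one y f⟩,
    ⟨by rw [mulVec_transpose]; exact heigen, y.length_pos,
      hasEigenvalue_toLin'_of_vecMul_eq hlength_ne heigen⟩,
    fun μ hμ => norm_le_of_mem_spectrum_of_vecMul_eq hnonneg y.length_pos heigen hμ⟩

theorem incidence_aperiodic_oddblock_leading_eigenvalue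
    (m : ℕ) (hm : 1 ≤ m) (y : UnitPartition m) (lam : ℝ) (hlam : 1 < lam)
    (f : ℝ → ℝ)
    (hmaps : Set.MapsTo f (Set.Icc 0 1) (Set.Icc 0 1))
    (hcont : ContinuousOn f (Set.Icc 0 1))
    (hmono : ∀ j : Fin m, StrictMonoOn f (y.interval j) ∨ StrictAntiOn f (y.interval j))
    (hpts : ∀ j : Fin (m + 1), ∃ k : Fin (m + 1), f (y.pts j) = y.pts k)
    (hlen : ∀ j : Fin m, ∀ s ∈ y.interval j, ∀ t ∈ y.interval j,
      |f s - f t| = lam * |s - t|)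
    (honto : ∀ j : Fin m, ∃ p : ℕ, 1 ≤ p ∧ f^[p] '' y.interval j = Set.Icc (0 : ℝ) 1) :
    -- (1) `N` is an aperiodic odd-block matrix with only entries 0 and 1
    (IsOddBlock (incidence y f) ∧
      (∃ p : ℕ, 1 ≤ p ∧ ∀ i j : Fin m, 0 < (incidence y f ^ p) i j) ∧
      (∀ i j : Fin m, incidence y f i j = 0 ∨ incidence y f i j = 1)) ∧
    -- (2) the vector of interval lengths is a positive eigenvector of `Nᵀ` with
    -- eigenvalue `λ`, so `λ` is an eigenvalue of `N`
    ((incidenceR y f)ᵀ.mulVec (fun i => y.pts i.succ - y.pts i.castSucc)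
        = lam • (fun j : Fin m => y.pts j.succ - y.pts j.castSucc) ∧
      (∀ i : Fin m, 0 < y.pts i.succ - y.pts i.castSucc) ∧
      Module.End.HasEigenvalue (Matrix.toLin' (incidenceR y f)) lam) ∧
    -- (3) `λ` is the leading eigenvalue of `N`
    (∀ μ : ℂ, μ ∈ spectrum ℂ ((incidenceR y f).map (Complex.ofReal)) →
      ‖μ‖ ≤ lam) :=
  incidence_aperiodic_oddblock_leading_eigenvalue_general m hm y lam f hmaps hcont hmono hpts hlen
    honto
end
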